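/- Let X be a normed space, C ⊆ X nonempty convex, T : C → C nonexpansive, and (λ_n)_{n≥1} a decreasing sequence in [0,1] with lim λ_n = 0 (rate of convergence α) and ∑ λ_n divergent (rate of divergence θ). Let x ∈ C with Halpern iteration (x_n) bounded and M ∈ ℕ* with M ≥ ‖x_n‖ + ‖x‖ + ‖Tx‖ for all n ≥ 1. Then for all ε ∈ (0,2) and all n ≥ max{ θ(α(ε/(8M)) + 1 + ⌈ln(8M/ε)⌉), α(ε/(4M)) }, we have ‖x_n - T x_n‖ < ε. -/

import Mathlib

open Finset Real

/-!
Nonexpansiveness of `T` and the monotonicity of `λ` give the recursive inequality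
`‖x (j+2) - x (j+1)‖ ≤ (1 - λ (j+2)) ‖x (j+1) - x j‖ + 2M (λ (j+1) - λ (j+2))`.
Unrolled from `m = α (ε / 8M)`, its product factor is at most `exp (-∑ λ i) ≤ ε / 8M`, because
`θ` makes the sum of the `λ i` beyond `m + 1` at least `ln (8M / ε)`; its drift term is at most
`2M λ (m+1) < ε / 4`. Hence `‖x (n+1) - x n‖ < ε / 2`, while
`‖x (n+1) - T (x n)‖ = λ (n+1) ‖x₀ - T (x n)‖ < ε / 2` once `n ≥ α (ε / 4M)`.
-/

theorem le_prod_one_sub_mul_add_of_le_one_sub_mul_add {a b μ : ℕ → ℝ} {c : ℝ} (hc : 0 ≤ c)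
    (hμ : ∀ j, μ j ∈ Set.Icc (0 : ℝ) 1) (hb : Antitone b)
    (hrec : ∀ j, a (j + 1) ≤ (1 - μ (j + 1)) * a j + c * (b j - b (j + 1))) (k : ℕ) :
    a k ≤ (∏ i ∈ range k, (1 - μ (i + 1))) * a 0 + c * (b 0 - b k) := by
  induction k with
  | zero => simp
  | succ k ih =>
    obtain ⟨hμ0, hμ1⟩ := hμ (k + 1)
    have hdrift : 0 ≤ c * (b 0 - b k) := mul_nonneg hc (sub_nonneg.2 (hb k.zero_le))
    calc a (k + 1) ≤ (1 - μ (k + 1)) * a k + c * (b k - b (k + 1)) := hrec k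
      _ ≤ (1 - μ (k + 1)) * ((∏ i ∈ range k, (1 - μ (i + 1))) * a 0 + c * (b 0 - b k))
          + c * (b k - b (k + 1)) := by gcongr
      _ ≤ _ := by rw [prod_range_succ]; nlinarith [mul_nonneg hμ0 hdrift]

theorem prod_one_sub_le_exp_neg_sum {ι : Type*} {s : Finset ι} {f : ι → ℝ}
    (hf : ∀ i ∈ s, f i ≤ 1) : ∏ i ∈ s, (1 - f i) ≤ exp (-∑ i ∈ s, f i) := by
  rw [← sum_neg_distrib, exp_sum]
  exact prod_le_prod (fun i hi ↦ sub_nonneg.2 (hf i hi)) fun i _ ↦ by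
    linarith [add_one_le_exp (-f i)]

theorem sum_Icc_one_le_of_le_one {lam : ℕ → ℝ} (hlam : ∀ n ≥ 1, lam n ≤ 1) (t : ℕ) :
    ∑ i ∈ Icc 1 t, lam i ≤ t := by
  simpa using sum_le_card_nsmul _ _ 1 fun i hi ↦ hlam i (mem_Icc.1 hi).1

theorem sum_Icc_one_add_eq_add_sum_range (lam : ℕ → ℝ) (m k : ℕ) :
    ∑ i ∈ Icc 1 (m + 1 + k), lam i =
      ∑ i ∈ Icc 1 (m + 1), lam i + ∑ i ∈ range k, lam (m + i + 2) := by
  induction k with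
  | zero => simp
  | succ k ih =>
    rw [← add_assoc, sum_Icc_succ_top (by omega), ih, sum_range_succ]
    ring_nf

theorem sum_Icc_one_le_add_sum_range {lam : ℕ → ℝ} (hlam : ∀ n ≥ 1, lam n ∈ Set.Icc (0 : ℝ) 1)
    {t m k : ℕ} (ht : t ≤ m + 1 + k) :
    ∑ i ∈ Icc 1 t, lam i ≤ (m + 1 : ℕ) + ∑ i ∈ range k, lam (m + i + 2) :=
  calc ∑ i ∈ Icc 1 t, lam i ≤ ∑ i ∈ Icc 1 (m + 1 + k), lam i :=
        sum_le_sum_of_subset_of_nonneg (Icc_subset_Icc_right ht)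
          fun i hi _ ↦ (hlam i (mem_Icc.1 hi).1).1
    _ = ∑ i ∈ Icc 1 (m + 1), lam i + ∑ i ∈ range k, lam (m + i + 2) :=
        sum_Icc_one_add_eq_add_sum_range lam m k
    _ ≤ _ := by grw [sum_Icc_one_le_of_le_one (fun n hn ↦ (hlam n hn).2)]

theorem exists_eq_add_and_le_sum_range {lam : ℕ → ℝ}
    (hlam : ∀ n ≥ 1, lam n ∈ Set.Icc (0 : ℝ) 1) {m r t n : ℕ}
    (ht : ((m + 1 + r : ℕ) : ℝ) ≤ ∑ i ∈ Icc 1 t, lam i) (htn : t ≤ n) :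
    ∃ k, n = m + k ∧ (r : ℝ) ≤ ∑ i ∈ range k, lam (m + i + 2) := by
  have hmt : m + 1 + r ≤ t := by
    exact_mod_cast ht.trans (sum_Icc_one_le_of_le_one (fun i hi ↦ (hlam i hi).2) t)
  refine ⟨n - m, by omega, ?_⟩
  have := sum_Icc_one_le_add_sum_range hlam (m := m) (k := n - m) (by omega : t ≤ _)
  push_cast at ht this
  linarith

theorem norm_le_and_norm_apply_le {X : Type*} [NormedAddCommGroup X] {C : Set X} {T : X → X}
    {x₀ : X} {x : ℕ → X} (hT : ∀ u ∈ C, ∀ v ∈ C, ‖T u - T v‖ ≤ ‖u - v‖)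
    (hxC : ∀ k, x k ∈ C) (hx0 : x 0 = x₀) {M : ℝ}
    (hM : ∀ n ≥ 1, ‖x n‖ + ‖x₀‖ + ‖T x₀‖ ≤ M) (k : ℕ) : ‖x k‖ ≤ M ∧ ‖T (x k)‖ ≤ M := by
  have h1 := hM 1 le_rfl
  have := norm_nonneg (x 1)
  rcases k.eq_zero_or_pos with rfl | hk
  · rw [hx0]
    constructor <;> linarith [norm_nonneg x₀, norm_nonneg (T x₀)]
  · have hTx : ‖T (x k)‖ ≤ ‖x k‖ + ‖x₀‖ + ‖T x₀‖ :=
      calc ‖T (x k)‖ ≤ ‖T x₀‖ + ‖T (x k) - T x₀‖ := norm_le_norm_add_norm_sub' _ _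
        _ ≤ ‖T x₀‖ + (‖x k‖ + ‖x₀‖) := by
          grw [hT _ (hxC k) _ (hx0 ▸ hxC 0), norm_sub_le]
        _ = _ := by ring
    constructor <;> linarith [hM k hk, norm_nonneg x₀, norm_nonneg (T x₀)]

section Halpern

variable {X : Type*} [NormedAddCommGroup X] [NormedSpace ℝ X] {C : Set X} {T : X → X}
  {lam : ℕ → ℝ} {x₀ : X} {x : ℕ → X}

theorem halpern_mem (hconv : Convex ℝ C) (hTmaps : Set.MapsTo T C C)
    (hlam : ∀ n ≥ 1, lam n ∈ Set.Icc (0 : ℝ) 1) (hx₀ : x₀ ∈ C) (hx0 : x 0 = x₀)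
    (hrec : ∀ n, x (n + 1) = lam (n + 1) • x₀ + (1 - lam (n + 1)) • T (x n)) (k : ℕ) :
    x k ∈ C := by
  induction k with
  | zero => exact hx0 ▸ hx₀
  | succ k ih =>
    obtain ⟨h0, h1⟩ := hlam (k + 1) (by omega)
    rw [hrec k]
    exact hconv hx₀ (hTmaps ih) h0 (by linarith) (by ring)

theorem halpern_succ_sub_apply
    (hrec : ∀ n, x (n + 1) = lam (n + 1) • x₀ + (1 - lam (n + 1)) • T (x n)) (n : ℕ) :
    x (n + 1) - T (x n) = lam (n + 1) • (x₀ - T (x n)) := by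
  rw [hrec n]; module

theorem halpern_succ_succ_sub_succ
    (hrec : ∀ n, x (n + 1) = lam (n + 1) • x₀ + (1 - lam (n + 1)) • T (x n)) (j : ℕ) :
    x (j + 2) - x (j + 1) = (1 - lam (j + 2)) • (T (x (j + 1)) - T (x j))
      + (lam (j + 1) - lam (j + 2)) • (T (x j) - x₀) := by
  rw [hrec (j + 1), hrec j]; module

theorem norm_halpern_succ_succ_sub_succ_le (hT : ∀ u ∈ C, ∀ v ∈ C, ‖T u - T v‖ ≤ ‖u - v‖)
    (hxC : ∀ k, x k ∈ C)
    (hrec : ∀ n, x (n + 1) = lam (n + 1) • x₀ + (1 - lam (n + 1)) • T (x n)) {R : ℝ}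
    (hR : ∀ k, ‖x₀ - T (x k)‖ ≤ R) {j : ℕ} (hlam : lam (j + 2) ≤ 1)
    (hdec : lam (j + 2) ≤ lam (j + 1)) :
    ‖x (j + 2) - x (j + 1)‖ ≤
      (1 - lam (j + 2)) * ‖x (j + 1) - x j‖ + R * (lam (j + 1) - lam (j + 2)) := by
  have hμ : 0 ≤ 1 - lam (j + 2) := sub_nonneg.2 hlam
  have hΔ : 0 ≤ lam (j + 1) - lam (j + 2) := sub_nonneg.2 hdec
  have hTx : ‖T (x (j + 1)) - T (x j)‖ ≤ ‖x (j + 1) - x j‖ := hT _ (hxC _) _ (hxC _)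
  have hTx₀ : ‖T (x j) - x₀‖ ≤ R := norm_sub_rev (T (x j)) x₀ ▸ hR j
  rw [halpern_succ_succ_sub_succ hrec j]
  grw [norm_add_le, norm_smul, norm_smul, Real.norm_of_nonneg hμ, Real.norm_of_nonneg hΔ, hTx,
    hTx₀, mul_comm R]

theorem norm_halpern_sub_apply_le (hconv : Convex ℝ C) (hTmaps : Set.MapsTo T C C)
    (hT : ∀ u ∈ C, ∀ v ∈ C, ‖T u - T v‖ ≤ ‖u - v‖)
    (hlam : ∀ n ≥ 1, lam n ∈ Set.Icc (0 : ℝ) 1) (hdec : ∀ n ≥ 1, lam (n + 1) ≤ lam n)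
    (hx₀ : x₀ ∈ C) (hx0 : x 0 = x₀)
    (hrec : ∀ n, x (n + 1) = lam (n + 1) • x₀ + (1 - lam (n + 1)) • T (x n)) {R : ℝ}
    (hxR : ∀ k, ‖x k‖ ≤ R) (hTR : ∀ k, ‖T (x k)‖ ≤ R) (m k : ℕ) :
    ‖x (m + k) - T (x (m + k))‖ ≤ 2 * R * exp (-∑ i ∈ range k, lam (m + i + 2))
      + 2 * R * lam (m + 1) + 2 * R * lam (m + k + 1) := by
  have hxC := halpern_mem hconv hTmaps hlam hx₀ hx0 hrec
  have hR : 0 ≤ R := (norm_nonneg _).trans (hxR 0)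
  have hx₀T : ∀ j, ‖x₀ - T (x j)‖ ≤ 2 * R := fun j ↦
    (norm_sub_le _ _).trans (by linarith [hx0 ▸ hxR 0, hTR j])
  have hstep := le_prod_one_sub_mul_add_of_le_one_sub_mul_add
    (a := fun j ↦ ‖x (m + j + 1) - x (m + j)‖) (b := fun j ↦ lam (m + j + 1))
    (μ := fun j ↦ lam (m + j + 1)) (by positivity) (fun j ↦ hlam _ (by omega))
    (antitone_nat_of_succ_le fun j ↦ hdec _ (by omega))
    (fun j ↦ norm_halpern_succ_succ_sub_succ_le hT hxC hrec hx₀T (hlam _ (by omega)).2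
      (hdec _ (by omega))) k
  have hprod := prod_one_sub_le_exp_neg_sum (s := range k) (f := fun i ↦ lam (m + i + 2))
    fun i _ ↦ (hlam _ (by omega)).2
  have hlam_nonneg : 0 ≤ lam (m + k + 1) := (hlam _ (by omega)).1
  have hprod_nonneg : 0 ≤ ∏ i ∈ range k, (1 - lam (m + i + 2)) :=
    prod_nonneg fun i _ ↦ sub_nonneg.2 (hlam _ (by omega)).2
  have hxm : ‖x (m + 1) - x m‖ ≤ 2 * R := by
    linarith [norm_sub_le (x (m + 1)) (x m), hxR m, hxR (m + 1)]
  have hdiff : ‖x (m + k + 1) - x (m + k)‖ ≤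
      2 * R * exp (-∑ i ∈ range k, lam (m + i + 2)) + 2 * R * lam (m + 1) :=
    calc ‖x (m + k + 1) - x (m + k)‖
        ≤ (∏ i ∈ range k, (1 - lam (m + i + 2))) * ‖x (m + 1) - x m‖
          + 2 * R * (lam (m + 1) - lam (m + k + 1)) := by simpa [add_assoc] using hstep
      _ ≤ _ := by grw [hprod, hxm]; nlinarith
  calc ‖x (m + k) - T (x (m + k))‖
      ≤ ‖x (m + k) - x (m + k + 1)‖ + ‖x (m + k + 1) - T (x (m + k))‖ :=
        norm_sub_le_norm_sub_add_norm_sub _ _ _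
    _ ≤ _ := by
      rw [norm_sub_rev, halpern_succ_sub_apply hrec, norm_smul,
        Real.norm_of_nonneg hlam_nonneg]
      grw [hdiff, hx₀T]
      linarith

end Halpern

theorem halpern_rate_decreasing_lambda_general
    {X : Type*} [NormedAddCommGroup X] [NormedSpace ℝ X]
    (C : Set X) (hconv : Convex ℝ C)
    (T : X → X) (hTmaps : Set.MapsTo T C C)
    (hT : ∀ u ∈ C, ∀ v ∈ C, ‖T u - T v‖ ≤ ‖u - v‖)
    (lam : ℕ → ℝ) (hlam : ∀ n ≥ 1, lam n ∈ Set.Icc (0:ℝ) 1)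
    (hdec : ∀ n ≥ 1, lam (n + 1) ≤ lam n)
    (α : ℝ → ℕ)
    (hα : ∀ ε > (0:ℝ), ∀ n : ℕ, α ε ≤ n → lam n < ε)
    (θ : ℕ → ℕ)
    (hθ : ∀ n : ℕ, 1 ≤ n → (n : ℝ) ≤ ∑ i ∈ Finset.Icc 1 (θ n), lam i)
    (x₀ : X) (hx₀ : x₀ ∈ C) (x : ℕ → X) (hx0 : x 0 = x₀)
    (hrec : ∀ n : ℕ, x (n + 1) = lam (n + 1) • x₀ + (1 - lam (n + 1)) • T (x n))
    (M : ℕ) (hMpos : 1 ≤ M)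
    (hM : ∀ n ≥ 1, ‖x n‖ + ‖x₀‖ + ‖T x₀‖ ≤ (M : ℝ)) :
    ∀ ε : ℝ, 0 < ε → ε < 2 →
      ∀ n : ℕ,
        max (θ (α (ε / (8 * M)) + 1 + ⌈Real.log (8 * M / ε)⌉₊)) (α (ε / (4 * M))) ≤ n →
        ‖x n - T (x n)‖ < ε := by
  intro ε hε _ n hn
  have hM0 : (0 : ℝ) < M := by exact_mod_cast hMpos
  have hxC := halpern_mem hconv hTmaps hlam hx₀ hx0 hrec
  have hbound := norm_le_and_norm_apply_le hT hxC hx0 hM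
  set m := α (ε / (8 * M))
  set L := Real.log (8 * M / ε)
  obtain ⟨k, rfl, hsum⟩ := exists_eq_add_and_le_sum_range hlam (hθ (m + 1 + ⌈L⌉₊) (by omega))
    ((le_max_left _ _).trans hn)
  have hL : L ≤ ∑ i ∈ range k, lam (m + i + 2) := (Nat.le_ceil L).trans hsum
  have hexp : exp (-∑ i ∈ range k, lam (m + i + 2)) ≤ ε / (8 * M) :=
    calc exp (-∑ i ∈ range k, lam (m + i + 2)) ≤ exp (-L) := exp_le_exp.2 (neg_le_neg hL)
      _ = ε / (8 * M) := by rw [exp_neg, exp_log (by positivity), inv_div]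
  have hm := hα (ε / (8 * M)) (by positivity) (m + 1) (by omega)
  have hn' := hα (ε / (4 * M)) (by positivity) (m + k + 1) (by omega)
  calc ‖x (m + k) - T (x (m + k))‖
      ≤ 2 * M * exp (-∑ i ∈ range k, lam (m + i + 2)) + 2 * M * lam (m + 1)
        + 2 * M * lam (m + k + 1) :=
        norm_halpern_sub_apply_le hconv hTmaps hT hlam hdec hx₀ hx0 hrec
          (fun k ↦ (hbound k).1) (fun k ↦ (hbound k).2) m k
    _ < 2 * M * (ε / (8 * M)) + 2 * M * (ε / (8 * M)) + 2 * M * (ε / (4 * M)) :=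
        add_lt_add (add_lt_add_of_le_of_lt (by gcongr) (by gcongr)) (by gcongr)
    _ = ε := by field_simp; ring

theorem halpern_rate_decreasing_lambda
    {X : Type*} [NormedAddCommGroup X] [NormedSpace ℝ X]
    (C : Set X) (hC : C.Nonempty) (hconv : Convex ℝ C)
    (T : X → X) (hTmaps : Set.MapsTo T C C)
    (hT : ∀ u ∈ C, ∀ v ∈ C, ‖T u - T v‖ ≤ ‖u - v‖)
    (lam : ℕ → ℝ) (hlam : ∀ n ≥ 1, lam n ∈ Set.Icc (0:ℝ) 1)
    (hdec : ∀ n ≥ 1, lam (n + 1) ≤ lam n)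
    (hlim : Filter.Tendsto lam Filter.atTop (nhds 0))
    (α : ℝ → ℕ) (hαpos : ∀ ε > (0:ℝ), 1 ≤ α ε)
    (hα : ∀ ε > (0:ℝ), ∀ n : ℕ, α ε ≤ n → lam n < ε)
    (θ : ℕ → ℕ) (hθpos : ∀ n : ℕ, 1 ≤ n → 1 ≤ θ n)
    (hθ : ∀ n : ℕ, 1 ≤ n → (n : ℝ) ≤ ∑ i ∈ Finset.Icc 1 (θ n), lam i)
    (x₀ : X) (hx₀ : x₀ ∈ C) (x : ℕ → X) (hx0 : x 0 = x₀)
    (hrec : ∀ n : ℕ, x (n + 1) = lam (n + 1) • x₀ + (1 - lam (n + 1)) • T (x n))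
    (hbound : ∃ K : ℝ, ∀ n : ℕ, ‖x n‖ ≤ K)
    (M : ℕ) (hMpos : 1 ≤ M)
    (hM : ∀ n ≥ 1, ‖x n‖ + ‖x₀‖ + ‖T x₀‖ ≤ (M : ℝ)) :
    ∀ ε : ℝ, 0 < ε → ε < 2 →
      ∀ n : ℕ,
        max (θ (α (ε / (8 * M)) + 1 + ⌈Real.log (8 * M / ε)⌉₊)) (α (ε / (4 * M))) ≤ n →
        ‖x n - T (x n)‖ < ε :=
  halpern_rate_decreasing_lambda_general C hconv T hTmaps hT lam hlam hdec α hα θ hθ x₀ hx₀ x hx0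
    hrec M hMpos hM
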